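/- arXiv:2209.12103 — 7 statements merged into one kernel-verified Lean document; each statement's English description precedes it below -/
import Mathlib

section
/- Let p ∈ (0,1], α ≥ 0, and let G be a (p,α)-jumbled graph on n vertices. Then for all subsets X, Y ⊆ V(G) with |X|·|Y| ≥ 100·(α/p)², there exist subsets X′ ⊆ X and Y′ ⊆ Y with |X′| ≥ 9|X|/10 and |Y′| ≥ 9|Y|/10 such that every vertex v ∈ X′ has at least p|Y′|/10 neighbours in Y′ and every vertex u ∈ Y′ has at least p|X′|/10 neighbours in X′. -/
/-- A graph `G` is `(p, α)`-jumbled if for all vertex subsets `X, Y` we have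
`|e(X,Y) - p|X||Y|| ≤ α √(|X||Y|)`. -/
def IsJumbled {V : Type*} [Fintype V] [DecidableEq V] (G : SimpleGraph V) [DecidableRel G.Adj]
    (p α : ℝ) : Prop :=
  ∀ X Y : Finset V,
    |((SimpleGraph.interedges G X Y).card : ℝ) - p * X.card * Y.card| ≤
      α * Real.sqrt ((X.card : ℝ) * Y.card)

/-!
Delete, one at a time, any vertex of `X` with fewer than `p|Y'|/10` neighbours in the current
`Y'`, and symmetrically. The deleted part `D` of `X` sends at most `p|Y||D|/10` edges into the
current `Y'`, which still holds nine tenths of `Y`; jumbledness then forces `|D||Y| = O((α/p)²)`,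
so since `|X||Y| ≥ 100 (α/p)²` the deletions never reach a tenth of `X`, and likewise for `Y`.
-/

open Finset SimpleGraph

section Interedges

variable {V : Type*} {G : SimpleGraph V} [DecidableRel G.Adj]

lemma card_interedges_eq_sum (A B : Finset V) :
    #(G.interedges A B) = ∑ a ∈ A, #{b ∈ B | G.Adj a b} := by
  rw [interedges_def, card_filter, sum_product]
  simp only [card_filter]

lemma card_interedges_insert_left [DecidableEq V] {v : V} {A : Finset V} (hv : v ∉ A)
    (B : Finset V) :
    #(G.interedges (insert v A) B) = #{b ∈ B | G.Adj v b} + #(G.interedges A B) := by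
  simp only [card_interedges_eq_sum, sum_insert hv]

end Interedges

namespace IsJumbled

variable {V : Type*} [Fintype V] [DecidableEq V] {G : SimpleGraph V} [DecidableRel G.Adj]
  {p α c : ℝ}

lemma sq_mul_card_mul_card_le (hG : IsJumbled G p α) (hp : 0 ≤ p) (hc : c ≤ 1)
    {D B : Finset V} (h : (#(G.interedges D B) : ℝ) ≤ c * p * #D * #B) :
    ((1 - c) * p) ^ 2 * (#D * #B) ≤ α ^ 2 := by
  set m : ℝ := #D * #B with hm
  have hm0 : 0 ≤ m := by positivity
  rcases hm0.eq_or_lt with hm0 | hm0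
  · rw [← hm0, mul_zero]
    positivity
  have hdev : (1 - c) * p * m ≤ α * √m := by
    have := (abs_le.mp (hG D B)).1
    rw [← hm] at this
    linarith
  have hsq : ((1 - c) * p * m) ^ 2 ≤ (α * √m) ^ 2 :=
    pow_le_pow_left₀ (by have := sub_nonneg.mpr hc; positivity) hdev 2
  rw [mul_pow α, Real.sq_sqrt hm0.le] at hsq
  refine le_of_mul_le_mul_right ?_ hm0
  linarith

lemma ten_mul_card_le (hG : IsJumbled G p α) (hp : 0 < p) {X Y D B : Finset V}
    (hsize : 100 * (α / p) ^ 2 ≤ (#X : ℝ) * #Y) (hB : B.Nonempty) (hBY : 9 * #Y ≤ 10 * #B)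
    (he : 10 * (#(G.interedges D B) : ℝ) ≤ p * #Y * #D) :
    10 * #D ≤ #X := by
  by_contra! hD
  have hD : (#X : ℝ) < 10 * #D := by exact_mod_cast hD
  have hBY : 9 * (#Y : ℝ) ≤ 10 * #B := by exact_mod_cast hBY
  have hB : (0 : ℝ) < #B := by exact_mod_cast hB.card_pos
  have hsparse : (#(G.interedges D B) : ℝ) ≤ 1 / 9 * p * #D * #B := by
    nlinarith [mul_le_mul_of_nonneg_left hBY (by positivity : (0 : ℝ) ≤ p * #D)]
  have hjumbled := hG.sq_mul_card_mul_card_le hp.le (by norm_num) hsparse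
  have hsize : 100 * α ^ 2 ≤ p ^ 2 * (#X * #Y) := by
    rw [div_pow, mul_div_assoc', div_le_iff₀ (by positivity)] at hsize
    linarith
  -- `|D||B| > (|X|/10)(9|Y|/10) ≥ 9 (α/p)²`, against `(8p/9)² |D||B| ≤ α²`
  have hXY : 9 * ((#X : ℝ) * #Y) < 100 * (#D * #B) := by
    nlinarith [mul_le_mul_of_nonneg_left hBY (Nat.cast_nonneg #X : (0 : ℝ) ≤ #X)]
  nlinarith [mul_lt_mul_of_pos_left hXY (by positivity : 0 < p ^ 2)]

end IsJumbled

section SparseTrim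

variable {V : Type*} [DecidableEq V] (G : SimpleGraph V) [DecidableRel G.Adj] (p : ℝ)

structure IsSparseTrim (X Y A B : Finset V) : Prop where
  subset_left : A ⊆ X
  subset_right : B ⊆ Y
  card_sdiff_left : 10 * #(X \ A) ≤ #X
  card_sdiff_right : 10 * #(Y \ B) ≤ #Y
  interedges_left : 10 * (#(G.interedges (X \ A) B) : ℝ) ≤ p * #Y * #(X \ A)
  interedges_right : 10 * (#(G.interedges (Y \ B) A) : ℝ) ≤ p * #X * #(Y \ B)

variable {G p} {X Y A B : Finset V}

lemma isSparseTrim_self (X Y : Finset V) : IsSparseTrim G p X Y X Y where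
  subset_left := subset_rfl
  subset_right := subset_rfl
  card_sdiff_left := by simp
  card_sdiff_right := by simp
  interedges_left := by simp
  interedges_right := by simp

namespace IsSparseTrim

lemma symm (h : IsSparseTrim G p X Y A B) : IsSparseTrim G p Y X B A :=
  ⟨h.2, h.1, h.4, h.3, h.6, h.5⟩

lemma nine_mul_card_le_left (h : IsSparseTrim G p X Y A B) : 9 * #X ≤ 10 * #A := by
  have := card_sdiff_add_card_eq_card h.subset_left
  have := h.card_sdiff_left
  omega

variable [Fintype V] {α : ℝ}

lemma erase_left (h : IsSparseTrim G p X Y A B) (hG : IsJumbled G p α) (hp : 0 < p)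
    (hsize : 100 * (α / p) ^ 2 ≤ (#X : ℝ) * #Y) {v : V} (hv : v ∈ A)
    (hdeg : (#{b ∈ B | G.Adj v b} : ℝ) < p * #B / 10) :
    IsSparseTrim G p X Y (A.erase v) B := by
  have hvD : v ∉ X \ A := fun hv' => (mem_sdiff.mp hv').2 hv
  have hD : X \ A.erase v = insert v (X \ A) := sdiff_erase (h.subset_left hv)
  have hBY : (#B : ℝ) ≤ #Y := by exact_mod_cast card_le_card h.subset_right
  have hsparse : 10 * (#(G.interedges (X \ A.erase v) B) : ℝ) ≤ p * #Y * #(X \ A.erase v) := by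
    rw [hD, card_interedges_insert_left hvD, card_insert_of_notMem hvD]
    push_cast
    nlinarith [h.interedges_left]
  refine ⟨(erase_subset v A).trans h.subset_left, h.subset_right, ?_, h.card_sdiff_right,
    hsparse, ?_⟩
  · have hB : B.Nonempty := by
      rw [nonempty_iff_ne_empty]
      rintro rfl
      simp at hdeg
    exact hG.ten_mul_card_le hp hsize hB (by have := nine_mul_card_le_left h.symm; omega) hsparse
  · refine le_trans ?_ h.interedges_right
    gcongr
    exact G.interedges_mono subset_rfl (erase_subset v A)

lemma erase_right (h : IsSparseTrim G p X Y A B) (hG : IsJumbled G p α) (hp : 0 < p)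
    (hsize : 100 * (α / p) ^ 2 ≤ (#X : ℝ) * #Y) {u : V} (hu : u ∈ B)
    (hdeg : (#{a ∈ A | G.Adj u a} : ℝ) < p * #A / 10) :
    IsSparseTrim G p X Y A (B.erase u) :=
  (h.symm.erase_left hG hp (by rwa [mul_comm (#Y : ℝ)]) hu hdeg).symm

lemma exists_le_card_filter_adj (h : IsSparseTrim G p X Y A B) (hG : IsJumbled G p α)
    (hp : 0 < p) (hsize : 100 * (α / p) ^ 2 ≤ (#X : ℝ) * #Y) :
    ∃ A' B', IsSparseTrim G p X Y A' B' ∧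
      (∀ v ∈ A', p * #B' / 10 ≤ (#{b ∈ B' | G.Adj v b} : ℝ)) ∧
      (∀ u ∈ B', p * #A' / 10 ≤ (#{a ∈ A' | G.Adj u a} : ℝ)) := by
  induction hn : #A + #B using Nat.strong_induction_on generalizing A B with
  | _ n ih =>
  by_cases hlowA : ∃ v ∈ A, (#{b ∈ B | G.Adj v b} : ℝ) < p * #B / 10
  · obtain ⟨v, hv, hdeg⟩ := hlowA
    refine ih _ ?_ (h.erase_left hG hp hsize hv hdeg) rfl
    have := card_erase_add_one hv
    omega
  by_cases hlowB : ∃ u ∈ B, (#{a ∈ A | G.Adj u a} : ℝ) < p * #A / 10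
  · obtain ⟨u, hu, hdeg⟩ := hlowB
    refine ih _ ?_ (h.erase_right hG hp hsize hu hdeg) rfl
    have := card_erase_add_one hu
    omega
  push Not at hlowA hlowB
  exact ⟨A, B, h, hlowA, hlowB⟩

end IsSparseTrim

end SparseTrim

theorem stmt_1_general {V : Type*} [Fintype V] [DecidableEq V] (G : SimpleGraph V) [DecidableRel G.Adj]
    (p α : ℝ) (hp0 : 0 < p) (hG : IsJumbled G p α)
    (X Y : Finset V) (hsize : 100 * (α / p) ^ 2 ≤ (X.card : ℝ) * Y.card) :
    ∃ X' ⊆ X, ∃ Y' ⊆ Y,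
      9 * (X.card : ℝ) / 10 ≤ X'.card ∧ 9 * (Y.card : ℝ) / 10 ≤ Y'.card ∧
      (∀ v ∈ X', p * (Y'.card : ℝ) / 10 ≤ ((Y'.filter (fun y => G.Adj v y)).card : ℝ)) ∧
      (∀ u ∈ Y', p * (X'.card : ℝ) / 10 ≤ ((X'.filter (fun x => G.Adj u x)).card : ℝ)) := by
  obtain ⟨A, B, h, hA, hB⟩ := (isSparseTrim_self X Y).exists_le_card_filter_adj hG hp0 hsize
  have hXA : 9 * (#X : ℝ) ≤ 10 * #A := by exact_mod_cast h.nine_mul_card_le_left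
  have hYB : 9 * (#Y : ℝ) ≤ 10 * #B := by exact_mod_cast h.symm.nine_mul_card_le_left
  exact ⟨A, h.subset_left, B, h.subset_right, by linarith, by linarith, hA, hB⟩

theorem stmt_1 {V : Type*} [Fintype V] [DecidableEq V] (G : SimpleGraph V) [DecidableRel G.Adj]
    (p α : ℝ) (hp0 : 0 < p) (hp1 : p ≤ 1) (hα : 0 ≤ α) (hG : IsJumbled G p α)
    (X Y : Finset V) (hsize : 100 * (α / p) ^ 2 ≤ (X.card : ℝ) * Y.card) :
    ∃ X' ⊆ X, ∃ Y' ⊆ Y,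
      9 * (X.card : ℝ) / 10 ≤ X'.card ∧ 9 * (Y.card : ℝ) / 10 ≤ Y'.card ∧
      (∀ v ∈ X', p * (Y'.card : ℝ) / 10 ≤ ((Y'.filter (fun y => G.Adj v y)).card : ℝ)) ∧
      (∀ u ∈ Y', p * (X'.card : ℝ) / 10 ≤ ((X'.filter (fun x => G.Adj u x)).card : ℝ)) :=
  stmt_1_general G p α hp0 hG X Y hsize
end

section
/- There exists n₀ such that the following holds for all n ≥ n₀. If G is a (p,α)-jumbled graph on n vertices with α ≤ p²n/200 and p > 10·n^{−1/3}, then G contains the Petersen graph as a subgraph. -/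
/-- The Petersen graph: vertices are the 2-element subsets of a 5-element set,
adjacent iff disjoint. -/
def petersen : SimpleGraph {s : Finset (Fin 5) // s.card = 2} where
  Adj a b := Disjoint (a : Finset (Fin 5)) (b : Finset (Fin 5))
  symm := ⟨fun _ _ h => h.symm⟩
  loopless := by
    refine ⟨?_⟩
    rintro ⟨a, ha⟩ h
    have : a = ∅ := disjoint_self.mp h
    simp [this] at ha

/-- `G` contains a copy of `F`. -/
def ContainsCopy {W V : Type*} (F : SimpleGraph W) (G : SimpleGraph V) : Prop :=
  ∃ f : W → V, Function.Injective f ∧ ∀ a b, F.Adj a b → G.Adj (f a) (f b)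

/-!
In a `(p, α)`-jumbled graph on `n` vertices with `α ≤ p²n/200`, every set of `n/2` vertices
spans an edge, and for every set `X` with `|X| ≥ p²n/4` all but `n/2500` vertices have at least
`p|X|/2` neighbours in `X`.

The Petersen graph consists of three disjoint edges `aa'`, `bb'`, `cc'` and four vertices joined
to `a'b'c'`, `a'bc`, `ab'c` and `abc'` respectively. Choose the three edges one after the other,
each with both endpoints outside the few bad vertices of the common neighbourhoods built so far.
Then every common neighbourhood of one endpoint from each edge has at least `(p/2)³n > 9`
vertices, so the last four vertices can be chosen distinct from all others.
-/

open Finset SimpleGraph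

instance : DecidableRel petersen.Adj := fun a b =>
  inferInstanceAs (Decidable (Disjoint a.1 b.1))

/-- The Petersen vertices playing the roles of `x₄, x₃, x₂, x₁, c, c', b, b', a, a'` in
`containsCopy_petersen_of_adj`. -/
def petersenLabel : Fin 10 → {s : Finset (Fin 5) // s.card = 2} :=
  ![⟨{0, 4}, rfl⟩, ⟨{0, 3}, rfl⟩, ⟨{0, 2}, rfl⟩, ⟨{0, 1}, rfl⟩, ⟨{1, 4}, rfl⟩,
    ⟨{2, 3}, rfl⟩, ⟨{1, 3}, rfl⟩, ⟨{2, 4}, rfl⟩, ⟨{1, 2}, rfl⟩, ⟨{3, 4}, rfl⟩]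

def petersenEdges : List (Fin 10 × Fin 10) :=
  [(8, 9), (6, 7), (4, 5), (9, 3), (7, 3), (5, 3), (9, 2), (6, 2), (4, 2),
    (8, 1), (7, 1), (4, 1), (8, 0), (6, 0), (5, 0)]

theorem petersenLabel_bijective : Function.Bijective petersenLabel := by decide

theorem mem_petersenEdges_of_adj :
    ∀ i j, petersen.Adj (petersenLabel i) (petersenLabel j) →
      (i, j) ∈ petersenEdges ∨ (j, i) ∈ petersenEdges := by
  decide

theorem containsCopy_petersen_of_edges {V : Type*} {G : SimpleGraph V} (f : Fin 10 → V)
    (hf : Function.Injective f) (hE : ∀ e ∈ petersenEdges, G.Adj (f e.1) (f e.2)) :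
    ContainsCopy petersen G := by
  let e := Equiv.ofBijective _ petersenLabel_bijective
  refine ⟨f ∘ e.symm, hf.comp e.symm.injective, fun s t hst => ?_⟩
  obtain ⟨i, rfl⟩ := e.surjective s
  obtain ⟨j, rfl⟩ := e.surjective t
  simp only [Function.comp_apply, Equiv.symm_apply_apply]
  rcases mem_petersenEdges_of_adj i j hst with h | h
  · exact hE _ h
  · exact (hE _ h).symm

theorem containsCopy_petersen_of_adj {V : Type*} {G : SimpleGraph V}
    {a a' b b' c c' x₁ x₂ x₃ x₄ : V}
    (hnd : [x₄, x₃, x₂, x₁, c, c', b, b', a, a'].Nodup)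
    (ha : G.Adj a a') (hb : G.Adj b b') (hc : G.Adj c c')
    (h₁ : G.Adj a' x₁ ∧ G.Adj b' x₁ ∧ G.Adj c' x₁) (h₂ : G.Adj a' x₂ ∧ G.Adj b x₂ ∧ G.Adj c x₂)
    (h₃ : G.Adj a x₃ ∧ G.Adj b' x₃ ∧ G.Adj c x₃) (h₄ : G.Adj a x₄ ∧ G.Adj b x₄ ∧ G.Adj c' x₄) :
    ContainsCopy petersen G := by
  refine containsCopy_petersen_of_edges ![x₄, x₃, x₂, x₁, c, c', b, b', a, a']
    (List.nodup_ofFn.1 hnd) ?_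
  simp only [petersenEdges, List.mem_cons, List.not_mem_nil, forall_eq_or_imp]
  exact ⟨ha, hb, hc, h₁.1, h₁.2.1, h₁.2.2, h₂.1, h₂.2.1, h₂.2.2, h₃.1, h₃.2.1, h₃.2.2,
    h₄.1, h₄.2.1, h₄.2.2, fun _ => False.elim⟩

theorem exists_mem_nodup_cons_of_length_lt {V : Type*} [DecidableEq V] {S : Finset V}
    {l : List V} (hl : l.Nodup) (h : l.length < #S) : ∃ x ∈ S, (x :: l).Nodup := by
  obtain ⟨x, hxS, hxl⟩ := exists_mem_notMem_of_card_lt_card (l.toFinset_card_le.trans_lt h)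
  exact ⟨x, hxS, List.nodup_cons.2 ⟨by simpa using hxl, hl⟩⟩

theorem one_thousand_lt_pow_three_mul {n p : ℝ} (hn : 0 < n) (hp : 10 * n ^ (-(1 / 3) : ℝ) < p) :
    1000 < p ^ 3 * n := by
  have hcube : (n ^ (-(1 / 3) : ℝ)) ^ 3 * n = 1 := by
    rw [← Real.rpow_natCast, ← Real.rpow_mul hn.le]
    norm_num [Real.rpow_neg_one, hn.ne']
  calc (1000 : ℝ) = (10 * n ^ (-(1 / 3) : ℝ)) ^ 3 * n := by rw [mul_pow, mul_assoc, hcube]; norm_num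
    _ < p ^ 3 * n := by gcongr

section Jumbled

variable {V : Type*} [Fintype V] [DecidableEq V] {G : SimpleGraph V} [DecidableRel G.Adj]
  {p α : ℝ}

variable (G) in
noncomputable def badSet (p : ℝ) (X : Finset V) : Finset V :=
  {v | (#(X ∩ G.neighborFinset v) : ℝ) < p / 2 * #X}

theorem pow_succ_mul_le_card_inter_neighborFinset (hp : 0 ≤ p) {X : Finset V} {v : V} {k : ℕ}
    {m : ℝ} (hv : v ∉ badSet G p X) (hX : (p / 2) ^ k * m ≤ #X) :
    (p / 2) ^ (k + 1) * m ≤ #(X ∩ G.neighborFinset v) := by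
  simp only [badSet, mem_filter, mem_univ, true_and, not_lt] at hv
  rw [pow_succ', mul_assoc]
  exact le_trans (by gcongr) hv

theorem card_interedges_le_sum (B X : Finset V) :
    #(G.interedges B X) ≤ ∑ v ∈ B, #(X ∩ G.neighborFinset v) := by
  rw [interedges, Rel.interedges_eq_biUnion]
  refine card_biUnion_le.trans (sum_le_sum fun v _ => ?_)
  rw [card_map, ← filter_mem_eq_inter]
  simp [mem_neighborFinset]

theorem IsJumbled.sq_mul_card_mul_card_badSet_le (hj : IsJumbled G p α) (X : Finset V) :
    p ^ 2 * #X * #(badSet G p X) ≤ 4 * α ^ 2 := by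
  set B := badSet G p X
  obtain hB | hB := B.eq_empty_or_nonempty
  · simp [hB]; positivity
  have he : (#(G.interedges B X) : ℝ) < p / 2 * #B * #X := by
    calc (#(G.interedges B X) : ℝ) ≤ ∑ v ∈ B, (#(X ∩ G.neighborFinset v) : ℝ) := by
          exact_mod_cast card_interedges_le_sum B X
      _ < ∑ v ∈ B, p / 2 * #X := sum_lt_sum_of_nonempty hB fun v hv => (mem_filter.1 hv).2
      _ = p / 2 * #B * #X := by rw [sum_const, nsmul_eq_mul]; ring
  have hlow := (abs_le.1 (hj B X)).1
  set s := Real.sqrt (#B * #X)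
  have hs : (#B : ℝ) * #X = s * s := (Real.mul_self_sqrt (by positivity)).symm
  have hE : (0 : ℝ) ≤ #(G.interedges B X) := Nat.cast_nonneg _
  have h1 : p / 2 * s * s < α * s := by
    have : p * (#B * #X) - α * s < p / 2 * (#B * #X) := by linarith
    rw [hs] at this; linarith
  have h2 : 0 < p / 2 * s * s := by
    have : (0 : ℝ) < p / 2 * (#B * #X) := by linarith
    rwa [hs, ← mul_assoc] at this
  have h3 : 0 < s := by
    by_contra! h
    have h0 : s = 0 := le_antisymm h (Real.sqrt_nonneg _)
    simp [h0] at h2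
  have h4 : p / 2 * s < α := lt_of_mul_lt_mul_right h1 h3.le
  have h5 : 0 < p / 2 * s := by nlinarith
  nlinarith [mul_self_lt_mul_self h5.le h4]

theorem IsJumbled.exists_adj_of_lt_mul_card (hj : IsJumbled G p α) {X : Finset V} (hX : X.Nonempty)
    (h : α < p * #X) : ∃ u ∈ X, ∃ v ∈ X, G.Adj u v := by
  have hx : (0 : ℝ) < #X := by exact_mod_cast hX.card_pos
  have hlow := (abs_le.1 (hj X X)).1
  rw [Real.sqrt_mul_self hx.le] at hlow
  have : 0 < #(G.interedges X X) := by
    have : (0 : ℝ) < #(G.interedges X X) := by nlinarith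
    exact_mod_cast this
  obtain ⟨⟨u, v⟩, huv⟩ := card_pos.1 this
  rw [mem_interedges_iff] at huv
  exact ⟨u, huv.1, v, huv.2.1, huv.2.2⟩

theorem IsJumbled.card_badSet_le (hj : IsJumbled G p α) (hp : 0 < p) (hα₀ : 0 ≤ α)
    (hα : α ≤ p ^ 2 * Fintype.card V / 200) {X : Finset V}
    (hX : (p / 2) ^ 2 * Fintype.card V ≤ #X) :
    (#(badSet G p X) : ℝ) ≤ Fintype.card V / 2500 := by
  set n : ℝ := (Fintype.card V : ℝ)
  obtain hn | hn := (Fintype.card V).eq_zero_or_pos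
  · simpa [n, hn] using card_le_univ (badSet G p X)
  have hn : (0 : ℝ) < n := Nat.cast_pos.2 hn
  have hB := hj.sq_mul_card_mul_card_badSet_le X
  have hα2 : α ^ 2 ≤ (p ^ 2 * n / 200) ^ 2 := pow_le_pow_left₀ hα₀ hα 2
  have hpX : p ^ 4 * n / 4 ≤ p ^ 2 * #X := by nlinarith [sq_nonneg p]
  have key : p ^ 4 * n / 4 * #(badSet G p X) ≤ p ^ 4 * n / 4 * (n / 2500) := by
    nlinarith [(#(badSet G p X)).cast_nonneg (α := ℝ)]
  exact le_of_mul_le_mul_left key (by positivity)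

theorem IsJumbled.exists_adj_notMem_badSet (hj : IsJumbled G p α) (hp : 0 < p) (hp₁ : p ≤ 1)
    (hα₀ : 0 ≤ α) (hα : α ≤ p ^ 2 * Fintype.card V / 200) (hn : 9 ≤ (Fintype.card V : ℝ))
    (Xs : List (Finset V)) (hXs : ∀ X ∈ Xs, (p / 2) ^ 2 * Fintype.card V ≤ #X)
    (hXs₄ : Xs.length ≤ 4) {l : List V} (hl : l.Nodup) (hl₄ : l.length ≤ 4) :
    ∃ u v, G.Adj u v ∧ (∀ X ∈ Xs, u ∉ badSet G p X ∧ v ∉ badSet G p X) ∧ (u :: v :: l).Nodup := by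
  set n : ℝ := (Fintype.card V : ℝ)
  set Q := Xs.toFinset.biUnion (badSet G p) ∪ l.toFinset
  have hQ : (#Q : ℝ) ≤ n / 2 := by
    have h₁ : #Q ≤ ∑ X ∈ Xs.toFinset, #(badSet G p X) + l.length :=
      (card_union_le _ _).trans (add_le_add card_biUnion_le l.toFinset_card_le)
    have h₂ : (∑ X ∈ Xs.toFinset, #(badSet G p X) : ℝ) ≤ 4 * (n / 2500) := by
      calc (∑ X ∈ Xs.toFinset, #(badSet G p X) : ℝ) ≤ ∑ X ∈ Xs.toFinset, n / 2500 :=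
            sum_le_sum fun X hX => hj.card_badSet_le hp hα₀ hα (hXs X (List.mem_toFinset.1 hX))
        _ ≤ 4 * (n / 2500) := by
            rw [sum_const, nsmul_eq_mul]
            gcongr
            exact_mod_cast Xs.toFinset_card_le.trans hXs₄
    have h₃ : (#Q : ℝ) ≤ ∑ X ∈ Xs.toFinset, (#(badSet G p X) : ℝ) + l.length := by
      exact_mod_cast h₁
    have h₄ : (l.length : ℝ) ≤ 4 := by exact_mod_cast hl₄
    linarith
  have hQc : n / 2 ≤ #Qᶜ := by
    rw [card_compl, Nat.cast_sub (card_le_univ Q)]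
    linarith
  have hQc₀ : Qᶜ.Nonempty := card_pos.1 (by exact_mod_cast (by linarith : (0 : ℝ) < #Qᶜ))
  obtain ⟨u, hu, v, hv, huv⟩ := hj.exists_adj_of_lt_mul_card hQc₀ (by nlinarith)
  simp only [Q, mem_compl, mem_union, mem_biUnion, List.mem_toFinset, not_or, not_exists,
    not_and] at hu hv
  exact ⟨u, v, huv, fun X hX => ⟨hu.1 X hX, hv.1 X hX⟩,
    List.nodup_cons.2 ⟨by simp [huv.ne, hu.2], List.nodup_cons.2 ⟨hv.2, hl⟩⟩⟩

theorem IsJumbled.exists_adj_refine (hj : IsJumbled G p α) (hp : 0 < p) (hp₁ : p ≤ 1)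
    (hα₀ : 0 ≤ α) (hα : α ≤ p ^ 2 * Fintype.card V / 200) (hn : 9 ≤ (Fintype.card V : ℝ))
    (k : ℕ) (hk : k ≤ 2) (Xs : List (Finset V))
    (hXs : ∀ X ∈ Xs, (p / 2) ^ k * Fintype.card V ≤ #X) (hXs₄ : Xs.length ≤ 4) {l : List V}
    (hl : l.Nodup) (hl₄ : l.length ≤ 4) :
    ∃ u v, G.Adj u v ∧ (u :: v :: l).Nodup ∧
      ∀ Y ∈ Xs.flatMap fun X => [X ∩ G.neighborFinset u, X ∩ G.neighborFinset v],
        (p / 2) ^ (k + 1) * Fintype.card V ≤ #Y := by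
  have hq : (p / 2) ^ 2 ≤ (p / 2) ^ k := pow_le_pow_of_le_one (by positivity) (by linarith) hk
  obtain ⟨u, v, huv, hgood, hnd⟩ := hj.exists_adj_notMem_badSet hp hp₁ hα₀ hα hn Xs
    (fun X hX => (mul_le_mul_of_nonneg_right hq (Nat.cast_nonneg _)).trans (hXs X hX)) hXs₄ hl hl₄
  refine ⟨u, v, huv, hnd, ?_⟩
  simp only [List.mem_flatMap, List.mem_cons, List.not_mem_nil, or_false]
  rintro Y ⟨X, hX, rfl | rfl⟩
  · exact pow_succ_mul_le_card_inter_neighborFinset hp.le (hgood X hX).1 (hXs X hX)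
  · exact pow_succ_mul_le_card_inter_neighborFinset hp.le (hgood X hX).2 (hXs X hX)

theorem IsJumbled.containsCopy_petersen (hj : IsJumbled G p α) (hp : 0 < p) (hp₁ : p ≤ 1)
    (hα₀ : 0 ≤ α) (hα : α ≤ p ^ 2 * Fintype.card V / 200)
    (hn : 9 < (p / 2) ^ 3 * Fintype.card V) : ContainsCopy petersen G := by
  have hn₉ : 9 ≤ (Fintype.card V : ℝ) := by
    nlinarith [pow_le_one₀ (by positivity : 0 ≤ p / 2) (by linarith : p / 2 ≤ 1) (n := 3),
      (Fintype.card V).cast_nonneg (α := ℝ)]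
  have extend := hj.exists_adj_refine hp hp₁ hα₀ hα hn₉
  have pick : ∀ {S : Finset V} {l : List V}, l.Nodup → l.length ≤ 9 →
      (p / 2) ^ 3 * Fintype.card V ≤ #S → ∃ x ∈ S, (x :: l).Nodup := fun {S l} hl hl₉ hS => by
    refine exists_mem_nodup_cons_of_length_lt hl ?_
    have : (l.length : ℝ) ≤ 9 := by exact_mod_cast hl₉
    exact_mod_cast (by linarith : (l.length : ℝ) < #S)
  obtain ⟨a, a', haa', hl₁, hA⟩ := extend 0 (by norm_num) [univ] (by simp) (by simp)
    List.nodup_nil (by simp)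
  obtain ⟨b, b', hbb', hl₂, hB⟩ := extend 1 (by norm_num) _ hA (by simp) hl₁ (by simp)
  obtain ⟨c, c', hcc', hl₃, hC⟩ := extend 2 (by norm_num) _ hB (by simp) hl₂ (by simp)
  obtain ⟨x₁, hx₁, hl₄⟩ := pick hl₃ (by simp)
    (hC (univ ∩ G.neighborFinset a' ∩ G.neighborFinset b' ∩ G.neighborFinset c') (by simp))
  obtain ⟨x₂, hx₂, hl₅⟩ := pick hl₄ (by simp)
    (hC (univ ∩ G.neighborFinset a' ∩ G.neighborFinset b ∩ G.neighborFinset c) (by simp))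
  obtain ⟨x₃, hx₃, hl₆⟩ := pick hl₅ (by simp)
    (hC (univ ∩ G.neighborFinset a ∩ G.neighborFinset b' ∩ G.neighborFinset c) (by simp))
  obtain ⟨x₄, hx₄, hl₇⟩ := pick hl₆ (by simp)
    (hC (univ ∩ G.neighborFinset a ∩ G.neighborFinset b ∩ G.neighborFinset c') (by simp))
  simp only [mem_inter, mem_univ, true_and, mem_neighborFinset, and_assoc] at hx₁ hx₂ hx₃ hx₄
  exact containsCopy_petersen_of_adj hl₇ haa' hbb' hcc' hx₁ hx₂ hx₃ hx₄

end Jumbled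

theorem stmt_2 :
    ∃ n₀ : ℕ, ∀ (V : Type) [Fintype V] [DecidableEq V]
      (G : SimpleGraph V) [DecidableRel G.Adj] (p α : ℝ),
      0 ≤ p → p ≤ 1 → 0 ≤ α → n₀ ≤ Fintype.card V →
      IsJumbled G p α →
      α ≤ p ^ 2 * (Fintype.card V : ℝ) / 200 →
      10 * (Fintype.card V : ℝ) ^ (-(1 / 3) : ℝ) < p →
      ContainsCopy petersen G := by
  refine ⟨1, fun V _ _ G _ p α _ hp₁ hα₀ hV hj hα hp => ?_⟩
  have hn : (0 : ℝ) < Fintype.card V := by exact_mod_cast hV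
  have hp₀ : 0 < p := lt_trans (by positivity) hp
  have h1000 := one_thousand_lt_pow_three_mul hn hp
  exact hj.containsCopy_petersen hp₀ hp₁ hα₀ hα (by linarith)
end

section
/- Let T be a forest on the vertex set {1,…,m}, let p ∈ (0,1], α ≥ 0, and let G be a (p,α)-jumbled graph on n vertices. Let X₁, …, X_m ⊆ V(G) be nonempty pairwise disjoint subsets such that |X_i|·|X_j| ≥ 2^m·(α/p)² for every edge ij of T. Then there exists an embedding f of T into G (an injective map from {1,…,m} to V(G) sending every edge of T to an edge of G) such that f(i) ∈ X_i for every i ∈ {1,…,m}. -/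
open Finset SimpleGraph

namespace SimpleGraph.IsAcyclic

variable {ι : Type*} {T : SimpleGraph ι}

theorem exists_neighborSet_subsingleton [Finite ι] [Nonempty ι] (hT : T.IsAcyclic) :
    ∃ u, (T.neighborSet u).Subsingleton := by
  obtain ⟨u, v, p, hp, hmax⟩ := Walk.exists_isPath_forall_isPath_length_le_length T
  -- every neighbour of `u` lies on the longest path `p`, hence is its second vertex
  have mem_support {w : ι} (huw : T.Adj u w) : w ∈ p.support := by
    by_contra hw
    have := hmax _ _ (p.cons huw.symm) (hp.cons hw)
    simp at this
  exact ⟨u, fun w huw w' huw' => (hT.eq_snd_of_adj_start hp huw (mem_support huw)).trans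
    (hT.eq_snd_of_adj_start hp huw' (mem_support huw')).symm⟩

theorem exists_mem_inter_neighborSet_subsingleton (hT : T.IsAcyclic) {S : Finset ι}
    (hS : S.Nonempty) : ∃ u ∈ S, ((S : Set ι) ∩ T.neighborSet u).Subsingleton := by
  have : Nonempty (S : Set ι) := hS.to_subtype
  obtain ⟨⟨u, hu⟩, hsub⟩ := (hT.induce (S : Set ι)).exists_neighborSet_subsingleton
  refine ⟨u, hu, fun v ⟨hv, huv⟩ w ⟨hw, huw⟩ => ?_⟩
  exact congrArg Subtype.val (@hsub ⟨v, hv⟩ huv ⟨w, hw⟩ huw)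

end SimpleGraph.IsAcyclic

namespace IsJumbled

variable {V : Type*} [Fintype V] [DecidableEq V] {G : SimpleGraph V} [DecidableRel G.Adj]
  {p α : ℝ}

theorem card_mul_card_le_of_forall_not_adj (hG : IsJumbled G p α) (hp : 0 < p)
    {A B : Finset V} (hAB : ∀ a ∈ A, ∀ b ∈ B, ¬G.Adj a b) :
    (#A * #B : ℝ) ≤ (α / p) ^ 2 := by
  have hempty : G.interedges A B = ∅ := by
    ext ⟨a, b⟩
    simp only [mem_interedges_iff, notMem_empty, iff_false, not_and]
    exact fun ha hb => hAB a ha b hb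
  have h := hG A B
  rw [hempty, card_empty, Nat.cast_zero, zero_sub, abs_neg, mul_assoc,
    abs_of_nonneg (by positivity)] at h
  set s := √(#A * #B : ℝ)
  have hs : s ^ 2 = #A * #B := Real.sq_sqrt (by positivity)
  rw [← hs] at h ⊢
  have hs0 : 0 ≤ s := Real.sqrt_nonneg _
  clear_value s
  rcases hs0.eq_or_lt with rfl | hs0
  · rw [zero_pow two_ne_zero]; positivity
  · have hps : p * s ≤ α := le_of_mul_le_mul_right (by linarith) hs0
    rw [div_pow, le_div_iff₀ (by positivity), ← mul_pow, mul_comm]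
    exact pow_le_pow_left₀ (by positivity) hps 2

theorem exists_subset_forall_exists_adj (hG : IsJumbled G p α) (hp : 0 < p)
    {A B : Finset V} (hA : A.Nonempty) (hB : B.Nonempty) (hAB : 2 * (α / p) ^ 2 ≤ #A * #B) :
    ∃ A' ⊆ A, A'.Nonempty ∧ (#A : ℝ) ≤ 2 * #A' ∧ ∀ a ∈ A', ∃ b ∈ B, G.Adj a b := by
  have hsplit := card_filter_add_card_filter_not (s := A) (fun a => ∃ b ∈ B, G.Adj a b)
  have hbad := hG.card_mul_card_le_of_forall_not_adj hp
    (A := {a ∈ A | ¬∃ b ∈ B, G.Adj a b}) (B := B) fun a ha b hb hab =>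
      (mem_filter.1 ha).2 ⟨b, hb, hab⟩
  have hBpos : (0 : ℝ) < #B := by exact_mod_cast hB.card_pos
  have hApos : (0 : ℝ) < #A := by exact_mod_cast hA.card_pos
  have hcard : (#A : ℝ) ≤ 2 * #{a ∈ A | ∃ b ∈ B, G.Adj a b} := by
    rw [← hsplit] at hAB ⊢
    push_cast at hAB ⊢
    nlinarith
  refine ⟨_, filter_subset _ A, ?_, hcard, fun a ha => (mem_filter.1 ha).2⟩
  rw [← card_pos, ← Nat.cast_pos (α := ℝ)]
  linarith

end IsJumbled

section Embedding

variable {ι V : Type*} {T : SimpleGraph ι} {G : SimpleGraph V}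

def IsHomOn (T : SimpleGraph ι) (G : SimpleGraph V) (S : Finset ι) (f : ι → V) : Prop :=
  ∀ i ∈ S, ∀ j ∈ S, T.Adj i j → G.Adj (f i) (f j)

theorem IsHomOn.update [DecidableEq ι] {S : Finset ι} {f : ι → V} {ℓ : ι} {v : V}
    (hf : IsHomOn T G (S.erase ℓ) f) (hv : ∀ k ∈ S, T.Adj ℓ k → G.Adj v (f k)) :
    IsHomOn T G S (Function.update f ℓ v) := by
  intro i hi j hj hij
  rcases eq_or_ne i ℓ with rfl | hiℓ
  · rw [Function.update_self, Function.update_of_ne hij.ne']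
    exact hv j hj hij
  rcases eq_or_ne j ℓ with rfl | hjℓ
  · rw [Function.update_self, Function.update_of_ne hij.ne]
    exact (hv i hi hij.symm).symm
  rw [Function.update_of_ne hiℓ, Function.update_of_ne hjℓ]
  exact hf i (mem_erase.2 ⟨hiℓ, hi⟩) j (mem_erase.2 ⟨hjℓ, hj⟩) hij

theorem card_mul_card_le_two_mul_card_update_mul_card_update [DecidableEq ι] {X : ι → Finset V}
    {k : ι} {Y : Finset V} (hY : (#(X k) : ℝ) ≤ 2 * #Y) {i j : ι} (hij : i ≠ j) :
    (#(X i) * #(X j) : ℝ) ≤ 2 * (#(Function.update X k Y i) * #(Function.update X k Y j)) := by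
  rcases eq_or_ne i k with rfl | hik
  · rw [Function.update_self, Function.update_of_ne hij.symm]
    nlinarith [(#(X j)).cast_nonneg (α := ℝ)]
  rcases eq_or_ne j k with rfl | hjk
  · rw [Function.update_self, Function.update_of_ne hik]
    nlinarith [(#(X i)).cast_nonneg (α := ℝ)]
  rw [Function.update_of_ne hik, Function.update_of_ne hjk]
  nlinarith [(#(X i)).cast_nonneg (α := ℝ), (#(X j)).cast_nonneg (α := ℝ)]

variable [Fintype V] [DecidableEq V] [DecidableRel G.Adj] {p α : ℝ}

theorem exists_isHomOn_of_isJumbled (hT : T.IsAcyclic) (hG : IsJumbled G p α) (hp : 0 < p)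
    (S : Finset ι) (X : ι → Finset V) (hne : ∀ i, (X i).Nonempty)
    (hsize : ∀ i ∈ S, ∀ j ∈ S, T.Adj i j → (2 : ℝ) ^ #S * (α / p) ^ 2 ≤ #(X i) * #(X j)) :
    ∃ f : ι → V, IsHomOn T G S f ∧ ∀ i, f i ∈ X i := by
  classical
  induction S using Finset.strongInduction generalizing X with
  | H S ih =>
  rcases S.eq_empty_or_nonempty with rfl | hS
  · exact ⟨fun i => (hne i).choose, by simp [IsHomOn], fun i => (hne i).choose_spec⟩
  obtain ⟨ℓ, hℓ, hleaf⟩ := hT.exists_mem_inter_neighborSet_subsingleton hS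
  have hpow : (2 : ℝ) ^ #S = 2 * 2 ^ #(S.erase ℓ) := by
    rw [← card_erase_add_one hℓ, pow_succ, mul_comm]
  have hQ : 0 ≤ (α / p) ^ 2 := sq_nonneg _
  by_cases hk : ∃ k ∈ S, T.Adj ℓ k
  · obtain ⟨k, hk, hℓk⟩ := hk
    obtain ⟨Y, hYX, hYne, hY, hYadj⟩ := hG.exists_subset_forall_exists_adj hp (hne k) (hne ℓ) <| by
      have := hsize k hk ℓ hℓ hℓk.symm
      nlinarith [one_le_pow₀ (M₀ := ℝ) (n := #(S.erase ℓ)) one_le_two]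
    obtain ⟨f, hf, hfX⟩ := ih (S.erase ℓ) (erase_ssubset hℓ) (Function.update X k Y)
      (Function.forall_update_iff X (p := fun _ s => s.Nonempty) |>.2 ⟨hYne, fun i _ => hne i⟩)
      fun i hi j hj hij => by
        have := hsize i (mem_of_mem_erase hi) j (mem_of_mem_erase hj) hij
        have := card_mul_card_le_two_mul_card_update_mul_card_update hY hij.ne
        nlinarith
    obtain ⟨v, hv, hfv⟩ := hYadj _ (by simpa using hfX k)
    refine ⟨Function.update f ℓ v, hf.update fun k' hk' hℓk' => ?_, ?_⟩
    · rw [hleaf ⟨hk', hℓk'⟩ ⟨hk, hℓk⟩]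
      exact hfv.symm
    · have hXsub : ∀ i, Function.update X k Y i ⊆ X i :=
        Function.forall_update_iff X (p := fun i s => s ⊆ X i) |>.2
          ⟨hYX, fun _ _ => subset_rfl⟩
      exact Function.forall_update_iff f (p := fun i w => w ∈ X i) |>.2
        ⟨hv, fun i _ => hXsub i (hfX i)⟩
  · obtain ⟨f, hf, hfX⟩ := ih (S.erase ℓ) (erase_ssubset hℓ) X hne fun i hi j hj hij => by
      have := hsize i (mem_of_mem_erase hi) j (mem_of_mem_erase hj) hij
      nlinarith [pow_nonneg (zero_le_two (α := ℝ)) #(S.erase ℓ)]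
    obtain ⟨v, hv⟩ := hne ℓ
    exact ⟨Function.update f ℓ v, hf.update fun k hk' hℓk => (hk ⟨k, hk', hℓk⟩).elim,
      Function.forall_update_iff f (p := fun i w => w ∈ X i) |>.2 ⟨hv, fun i _ => hfX i⟩⟩

end Embedding

theorem stmt_4_general (m : ℕ) (T : SimpleGraph (Fin m)) (hT : T.IsAcyclic)
    {V : Type*} [Fintype V] [DecidableEq V] (G : SimpleGraph V) [DecidableRel G.Adj]
    (p α : ℝ) (hp0 : 0 < p) (hG : IsJumbled G p α)
    (X : Fin m → Finset V) (hne : ∀ i, (X i).Nonempty)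
    (hdisj : ∀ i j, i ≠ j → Disjoint (X i) (X j))
    (hsize : ∀ i j, T.Adj i j → (2 : ℝ) ^ m * (α / p) ^ 2 ≤ ((X i).card : ℝ) * (X j).card) :
    ∃ f : Fin m → V, Function.Injective f ∧
      (∀ i j, T.Adj i j → G.Adj (f i) (f j)) ∧ ∀ i, f i ∈ X i := by
  obtain ⟨f, hf, hfX⟩ := exists_isHomOn_of_isJumbled hT hG hp0 univ X hne
    fun i _ j _ hij => by simpa using hsize i j hij
  refine ⟨f, fun i j hij => ?_, fun i j hij => hf i (mem_univ i) j (mem_univ j) hij, hfX⟩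
  by_contra hij_ne
  exact disjoint_left.1 (hdisj i j hij_ne) (hfX i) (hij ▸ hfX j)

theorem stmt_4 (m : ℕ) (T : SimpleGraph (Fin m)) (hT : T.IsAcyclic)
    {V : Type*} [Fintype V] [DecidableEq V] (G : SimpleGraph V) [DecidableRel G.Adj]
    (p α : ℝ) (hp0 : 0 < p) (hp1 : p ≤ 1) (hα : 0 ≤ α) (hG : IsJumbled G p α)
    (X : Fin m → Finset V) (hne : ∀ i, (X i).Nonempty)
    (hdisj : ∀ i j, i ≠ j → Disjoint (X i) (X j))
    (hsize : ∀ i j, T.Adj i j → (2 : ℝ) ^ m * (α / p) ^ 2 ≤ ((X i).card : ℝ) * (X j).card) :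
    ∃ f : Fin m → V, Function.Injective f ∧
      (∀ i j, T.Adj i j → G.Adj (f i) (f j)) ∧ ∀ i, f i ∈ X i :=
  stmt_4_general m T hT G p α hp0 hG X hne hdisj hsize
end

section
/- Let p ≠ 3 be a prime and let G be the Cayley graph on H = (ℤ/pℤ)² with connection set S = {(x, x³) : x ∈ ℤ/pℤ, x ≠ 0}, i.e., two vertices u, v ∈ H are adjacent if and only if u − v ∈ S. Then G is triangle-free: there do not exist three pairwise adjacent vertices in G. -/
/-- The Cayley graph on `(ℤ/pℤ)²` with connection set `S = {(x, x³) : x ≠ 0}`: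
`u` and `v` are adjacent iff `u - v ∈ S`. -/
def cayleyCube (p : ℕ) : SimpleGraph (ZMod p × ZMod p) where
  Adj u v := ∃ x : ZMod p, x ≠ 0 ∧ u - v = (x, x ^ 3)
  symm := by
    constructor
    rintro u v ⟨x, hx, h⟩
    refine ⟨-x, neg_ne_zero.mpr hx, ?_⟩
    have h' : v - u = -(u - v) := by ring
    rw [h', h]
    refine Prod.ext ?_ ?_ <;> simp <;> ring
  loopless := by
    constructor
    rintro u ⟨x, hx, h⟩
    rw [sub_self] at h
    exact hx (congrArg Prod.fst h).symm


/-! Going around a triangle `u, v, w` of the graph, the differences `u - v = (x, x³)` and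
`v - w = (y, y³)` add up to `u - w = (x + y, x³ + y³)`, which must again be of the form
`(z, z³)`; so `(x + y)³ = x³ + y³`, i.e. `3xy(x + y) = 0`, impossible when `3 ≠ 0` and
`x, y, x + y` are all nonzero. -/

theorem ZMod.natCast_ne_zero_of_prime {p q : ℕ} (hp : p.Prime) (hq : q.Prime) (hpq : p ≠ q) :
    (q : ZMod p) ≠ 0 := by
  rw [Ne, ZMod.natCast_eq_zero_iff, Nat.prime_dvd_prime_iff_eq hp hq]
  exact hpq

theorem add_pow_three_ne {R : Type*} [CommRing R] [NoZeroDivisors R] {x y : R}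
    (h3 : (3 : R) ≠ 0) (hx : x ≠ 0) (hy : y ≠ 0) (hxy : x + y ≠ 0) :
    (x + y) ^ 3 ≠ x ^ 3 + y ^ 3 := by
  intro h
  have : 3 * x * y * (x + y) = 0 := by linear_combination h
  simp only [mul_eq_zero, h3, hx, hy, hxy, or_self] at this

theorem stmt_8 (p : ℕ) (hp : p.Prime) (hp3 : p ≠ 3) :
    ¬ ∃ u v w : ZMod p × ZMod p,
      (cayleyCube p).Adj u v ∧ (cayleyCube p).Adj v w ∧ (cayleyCube p).Adj u w := by
  rintro ⟨u, v, w, ⟨x, hx, huv⟩, ⟨y, hy, hvw⟩, ⟨z, hz, huw⟩⟩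
  have hsum : (z, z ^ 3) = (x + y, x ^ 3 + y ^ 3) := by
    rw [← huw, ← Prod.mk_add_mk, ← huv, ← hvw, sub_add_sub_cancel]
  obtain ⟨rfl, hcube⟩ := Prod.mk.inj hsum
  have : Fact p.Prime := ⟨hp⟩
  have h3 : (3 : ZMod p) ≠ 0 := by
    exact_mod_cast ZMod.natCast_ne_zero_of_prime hp Nat.prime_three hp3
  exact add_pow_three_ne h3 hx hy hz hcube
end

section
/- Let p ≠ 3 be a prime and let G be the Cayley graph on H = (ℤ/pℤ)² with connection set S = {(x, x³) : x ∈ ℤ/pℤ, x ≠ 0}, i.e., two vertices u, v ∈ H are adjacent if and only if u − v ∈ S. Then G is K_{2,3}-free: every pair of distinct vertices u, v ∈ H has at most two common neighbours in G. -/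
section CubeDifference

variable {R : Type*} [CommRing R] [NoZeroDivisors R]

theorem add_eq_of_cube_sub_cube_eq {a x y : R} (h3a : 3 * a ≠ 0) (hxy : x ≠ y)
    (h : x ^ 3 - (x - a) ^ 3 = y ^ 3 - (y - a) ^ 3) : x + y = a := by
  have hfactor : 3 * a * (x - y) * (x + y - a) = 0 := by linear_combination h
  rcases mul_eq_zero.mp hfactor with h | h
  · exact absurd h (mul_ne_zero h3a (sub_ne_zero.mpr hxy))
  · linear_combination h

theorem ncard_setOf_cube_sub_cube_eq_le_two {a b : R} (h3 : (3 : R) ≠ 0)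
    (hab : a ≠ 0 ∨ b ≠ 0) : {x : R | x ^ 3 - (x - a) ^ 3 = b}.ncard ≤ 2 := by
  rcases eq_or_ne a 0 with rfl | ha
  · have hb : b ≠ 0 := hab.resolve_left (not_not.mpr rfl)
    simp [hb.symm]
  obtain hs | ⟨x, hx⟩ := {x : R | x ^ 3 - (x - a) ^ 3 = b}.eq_empty_or_nonempty
  · simp [hs]
  have hpair : {x : R | x ^ 3 - (x - a) ^ 3 = b} ⊆ {x, a - x} := by
    intro y hy
    rcases eq_or_ne x y with rfl | hxy
    · exact Or.inl rfl
    · have := add_eq_of_cube_sub_cube_eq (mul_ne_zero h3 ha) hxy (hx.trans hy.symm)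
      exact Or.inr (Set.mem_singleton_iff.mpr (by linear_combination this))
  calc _ ≤ ({x, a - x} : Set R).ncard := Set.ncard_le_ncard hpair
    _ ≤ 2 := (Set.ncard_insert_le _ _).trans (by simp)

end CubeDifference

theorem ZMod.three_ne_zero_of_prime {p : ℕ} (hp : p.Prime) (hp3 : p ≠ 3) : (3 : ZMod p) ≠ 0 := by
  have h : ((3 : ℕ) : ZMod p) ≠ 0 := fun h =>
    hp3 ((Nat.prime_dvd_prime_iff_eq hp Nat.prime_three).mp ((ZMod.natCast_eq_zero_iff 3 p).mp h))
  exact_mod_cast h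

theorem cayleyCube_commonNeighbors_subset (p : ℕ) (u v : ZMod p × ZMod p) :
    (cayleyCube p).commonNeighbors u v ⊆
      (fun x => u - (x, x ^ 3)) '' {x | x ^ 3 - (x - (u - v).1) ^ 3 = (u - v).2} := by
  rintro w ⟨⟨x, -, hx⟩, ⟨y, -, hy⟩⟩
  have huv : u - v = (x - y, x ^ 3 - y ^ 3) := by
    rw [← sub_sub_sub_cancel_right u v w, hx, hy]
    rfl
  refine ⟨x, ?_, show u - (x, x ^ 3) = w by rw [← hx, sub_sub_cancel]⟩
  simp [huv]

/-- Every pair of distinct vertices has at most two common neighbours. -/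
theorem stmt_9 (p : ℕ) (hp : p.Prime) (hp3 : p ≠ 3)
    (u v : ZMod p × ZMod p) (huv : u ≠ v) :
    {w : ZMod p × ZMod p | (cayleyCube p).Adj u w ∧ (cayleyCube p).Adj v w}.ncard ≤ 2 := by
  have := Fact.mk hp
  have hdiff : (u - v).1 ≠ 0 ∨ (u - v).2 ≠ 0 := by
    by_contra! h
    exact huv (sub_eq_zero.mp (Prod.ext h.1 h.2))
  calc _ = ((cayleyCube p).commonNeighbors u v).ncard := rfl
    _ ≤ _ := Set.ncard_le_ncard (cayleyCube_commonNeighbors_subset p u v)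
    _ ≤ _ := Set.ncard_image_le
    _ ≤ 2 := ncard_setOf_cube_sub_cube_eq_le_two (ZMod.three_ne_zero_of_prime hp hp3) hdiff
end

section
/- Let q be an odd prime power. Then there do not exist vectors x₁, x₂, x₃ ∈ 𝔽_q³ such that x₁·x₂ = x₁·x₃ = x₂·x₃ = 0 and each of x₁·x₁, x₂·x₂, x₃·x₃ is a non-square in 𝔽_q. In other words, the induced subgraph of the Erdős–Rényi orthogonal polarity graph on the non-square points is triangle-free. -/
open Matrix

/-!
If `x₁, x₂, x₃` are pairwise orthogonal, the matrix `M` with these rows satisfies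
`M * Mᵀ = diagonal (xᵢ · xᵢ)`, so `(det M)² = (x₁ · x₁) (x₂ · x₂) (x₃ · x₃)` is a square.
But in a finite field the quadratic character is multiplicative, so a product of an odd
number of non-squares is a non-square.
-/

theorem Matrix.det_sq_eq_prod_dotProduct_self {n R : Type*} [Fintype n] [DecidableEq n]
    [CommRing R] (M : Matrix n n R) (hM : Pairwise fun i j => M i ⬝ᵥ M j = 0) :
    M.det ^ 2 = ∏ i, M i ⬝ᵥ M i := by
  have hdiag : M * Mᵀ = diagonal fun i => M i ⬝ᵥ M i := by
    ext i j
    rw [mul_apply', diagonal_apply]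
    split_ifs with hij
    · subst hij; rfl
    · exact hM hij
  rw [sq, ← det_diagonal, ← hdiag, det_mul, det_transpose]

theorem FiniteField.not_isSquare_prod_of_odd_card {ι F : Type*} [Field F] [Fintype F]
    [DecidableEq F] {s : Finset ι} (hs : Odd s.card) {d : ι → F}
    (hd : ∀ i ∈ s, ¬IsSquare (d i)) : ¬IsSquare (∏ i ∈ s, d i) := by
  have hchar : quadraticChar F (∏ i ∈ s, d i) = (-1) ^ s.card := by
    rw [map_prod, Finset.prod_congr rfl fun i hi =>
      quadraticChar_neg_one_iff_not_isSquare.mpr (hd i hi), Finset.prod_const]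
  rw [← quadraticChar_neg_one_iff_not_isSquare, hchar, hs.neg_one_pow]

theorem stmt_13_general (F : Type) [Field F] [Fintype F] :
    ¬ ∃ x₁ x₂ x₃ : Fin 3 → F,
      dotProduct x₁ x₂ = 0 ∧ dotProduct x₁ x₃ = 0 ∧ dotProduct x₂ x₃ = 0 ∧
      (¬ ∃ a : F, dotProduct x₁ x₁ = a ^ 2) ∧
      (¬ ∃ a : F, dotProduct x₂ x₂ = a ^ 2) ∧
      (¬ ∃ a : F, dotProduct x₃ x₃ = a ^ 2) := by
  classical
  rintro ⟨x₁, x₂, x₃, h₁₂, h₁₃, h₂₃, hn₁, hn₂, hn₃⟩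
  let M : Matrix (Fin 3) (Fin 3) F := ![x₁, x₂, x₃]
  have horth : Pairwise fun i j => M i ⬝ᵥ M j = 0 := by
    intro i j hij
    fin_cases i <;> fin_cases j <;>
      simp_all [M, dotProduct_comm x₂ x₁, dotProduct_comm x₃ x₁, dotProduct_comm x₃ x₂]
  have hnonsq : ∀ i ∈ Finset.univ, ¬IsSquare (M i ⬝ᵥ M i) := by
    intro i _
    rw [isSquare_iff_exists_sq]
    fin_cases i <;> assumption
  exact FiniteField.not_isSquare_prod_of_odd_card (by decide) hnonsq
    (M.det_sq_eq_prod_dotProduct_self horth ▸ IsSquare.sq M.det)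

/-- In a finite field of odd order (i.e. `𝔽_q` with `q` an odd prime power), there are
no three pairwise orthogonal vectors in `𝔽_q³` all of whose self dot products are
non-squares: the induced subgraph of the Erdős–Rényi orthogonal polarity graph on the
non-square points is triangle-free. -/
theorem stmt_13 (F : Type) [Field F] [Fintype F] (hodd : Odd (Fintype.card F)) :
    ¬ ∃ x₁ x₂ x₃ : Fin 3 → F,
      dotProduct x₁ x₂ = 0 ∧ dotProduct x₁ x₃ = 0 ∧ dotProduct x₂ x₃ = 0 ∧
      (¬ ∃ a : F, dotProduct x₁ x₁ = a ^ 2) ∧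
      (¬ ∃ a : F, dotProduct x₂ x₂ = a ^ 2) ∧
      (¬ ∃ a : F, dotProduct x₃ x₃ = a ^ 2) :=
  stmt_13_general F
end

section
/- Let q be a prime power, t ≥ 2 an integer, and let AK(t, q) denote the graph whose vertices are the projective equivalence classes [x] of vectors x ∈ 𝔽_q^{t+1} with x·x ≠ 0, with two distinct classes [x], [y] adjacent if and only if x·y = 0; define AK(t−1, q) on 𝔽_q^t analogously. Let v ∈ 𝔽_q^{t+1} satisfy v·v ≠ 0 and suppose e′₁, …, e′_t is an orthonormal basis of the hyperplane v^⊥ = {w ∈ 𝔽_q^{t+1} : w·v = 0}, i.e., e′_i · e′_j equals 1 if i = j and 0 otherwise. Then the induced subgraph of AK(t, q) on the neighbourhood N([v]) of the vertex [v] is isomorphic to AK(t−1, q); indeed the linear map sending the i-th standard basis vector of 𝔽_q^t to e′_i induces such a graph isomorphism. -/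
open Matrix

/-- Projective equivalence on the non-absolute vectors of `𝔽_q^r`:
`x ≈ y` iff `x = a • y` for some nonzero scalar `a`. -/
def projSetoid (F : Type) [Field F] (r : ℕ) :
    Setoid {x : Fin r → F // dotProduct x x ≠ 0} where
  r x y := ∃ a : F, a ≠ 0 ∧ x.1 = a • y.1
  iseqv := by
    constructor
    · intro x; exact ⟨1, one_ne_zero, (one_smul _ _).symm⟩
    · rintro x y ⟨a, ha, h⟩
      exact ⟨a⁻¹, inv_ne_zero ha, by rw [h, smul_smul, inv_mul_cancel₀ ha, one_smul]⟩
    · rintro x y z ⟨a, ha, h⟩ ⟨b, hb, h'⟩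
      exact ⟨a * b, mul_ne_zero ha hb, by rw [h, h', smul_smul]⟩

/-- The Alon–Krivelevich graph `AK(r, q)` : vertices are projective classes of vectors
`x ∈ 𝔽_q^{r+... }` (here of `Fin r → F`) with `x ⬝ᵥ x ≠ 0`, two distinct classes being
adjacent iff `x ⬝ᵥ y = 0`. (Thus `AK F r` is the graph denoted `AK(r-1, q)` in the paper,
its vertices living in the `r`-dimensional vector space.) -/
def AK (F : Type) [Field F] (r : ℕ) : SimpleGraph (Quotient (projSetoid F r)) where
  Adj u v := u ≠ v ∧ Quotient.liftOn₂ u v (fun x y => dotProduct x.1 y.1 = 0)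
    (by
      rintro x y x' y' ⟨a, ha, hx⟩ ⟨b, hb, hy⟩
      simp only [eq_iff_iff]
      rw [hx, hy, smul_dotProduct, dotProduct_smul, smul_eq_mul, smul_eq_mul]
      constructor
      · intro h
        rcases mul_eq_zero.mp h with h | h
        · exact absurd h ha
        · rcases mul_eq_zero.mp h with h | h
          · exact absurd h hb
          · exact h
      · intro h; rw [h, mul_zero, mul_zero])
  symm := by
    constructor
    rintro u v ⟨hne, h⟩
    refine ⟨hne.symm, ?_⟩
    induction u using Quotient.ind
    induction v using Quotient.ind
    simpa [dotProduct_comm] using h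
  loopless := ⟨fun u h => h.1 rfl⟩

/-!
The map `x ↦ ∑ xᵢ e'ᵢ` is a linear isometry `𝔽_q^t → 𝔽_q^{t+1}`; since the dot product is
nondegenerate it is injective, so it induces an embedding of `AK(t-1, q)` into `AK(t, q)`.
Its image is exactly `N([v])`: `v` and the `e'ᵢ` form an orthogonal family of `t + 1`
anisotropic vectors, hence a basis, so every `w ⊥ v` equals `∑ (w·e'ᵢ) e'ᵢ`.
-/
section Orthonormal

variable {F ι n : Type*} [Field F] [Fintype ι] [Fintype n] {e : ι → n → F}

theorem linearCombination_dotProduct (x : ι → F) (w : n → F) :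
    Fintype.linearCombination F e x ⬝ᵥ w = ∑ i, x i * (e i ⬝ᵥ w) := by
  simp only [Fintype.linearCombination_apply, sum_dotProduct, smul_dotProduct, smul_eq_mul]

theorem linearCombination_dotProduct_eq_zero {w : n → F} (hew : ∀ i, e i ⬝ᵥ w = 0) (x : ι → F) :
    Fintype.linearCombination F e x ⬝ᵥ w = 0 := by
  simp [linearCombination_dotProduct, hew]

variable [DecidableEq ι]

theorem linearCombination_dotProduct_of_orthonormal
    (he : ∀ i j, e i ⬝ᵥ e j = if i = j then 1 else 0) (x : ι → F) (j : ι) :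
    Fintype.linearCombination F e x ⬝ᵥ e j = x j := by
  simp [linearCombination_dotProduct, he]

theorem linearCombination_dotProduct_linearCombination_of_orthonormal
    (he : ∀ i j, e i ⬝ᵥ e j = if i = j then 1 else 0) (x y : ι → F) :
    Fintype.linearCombination F e x ⬝ᵥ Fintype.linearCombination F e y = x ⬝ᵥ y := by
  rw [linearCombination_dotProduct]
  simp only [dotProduct_comm (e _), linearCombination_dotProduct_of_orthonormal he]
  rfl

theorem eq_linearCombination_of_dotProduct_eq_zero
    (he : ∀ i j, e i ⬝ᵥ e j = if i = j then 1 else 0) {v : n → F} (hv : v ⬝ᵥ v ≠ 0)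
    (hev : ∀ i, e i ⬝ᵥ v = 0) (hcard : Fintype.card ι + 1 = Fintype.card n) {w : n → F}
    (hw : w ⬝ᵥ v = 0) : w = Fintype.linearCombination F e fun i ↦ w ⬝ᵥ e i := by
  let b : Option ι → n → F := fun o ↦ o.elim v e
  have hb : Submodule.span F (Set.range b) = ⊤ := by
    refine LinearIndependent.span_eq_top_of_card_eq_finrank' ?_ (by simpa using hcard)
    refine LinearMap.BilinForm.linearIndependent_of_iIsOrtho (B := dotProductBilin F F) ?_ ?_
    · rintro (_ | i) (_ | j) hij <;> show b _ ⬝ᵥ b _ = 0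
      · exact absurd rfl hij
      · simp [b, dotProduct_comm v, hev]
      · simp [b, hev]
      · simp [b, he, (Option.some_injective _).ne_iff.mp hij]
    · rintro (_ | i) <;> simp [b, he, hv]
  have horth : dotProductBilin F F (w - Fintype.linearCombination F e fun i ↦ w ⬝ᵥ e i) = 0 := by
    refine LinearMap.ext_on_range hb ?_
    rintro (_ | i) <;> simp [b, hw, linearCombination_dotProduct_eq_zero hev,
      linearCombination_dotProduct_of_orthonormal he]
  exact sub_eq_zero.mp (dotProduct_eq_zero _ fun u ↦ congr($horth u))

end Orthonormal

theorem LinearMap.injective_of_dotProduct_map {F m n : Type*} [Field F] [Fintype m] [Fintype n]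
    {f : (m → F) →ₗ[F] n → F} (hf : ∀ x y, f x ⬝ᵥ f y = x ⬝ᵥ y) : Function.Injective f := by
  refine (injective_iff_map_eq_zero f).mpr fun x hx ↦ dotProduct_eq_zero x fun y ↦ ?_
  rw [← hf, hx, zero_dotProduct]

namespace AK

variable {F : Type} [Field F] {r s : ℕ}

theorem adj_mk {x y : {x : Fin r → F // x ⬝ᵥ x ≠ 0}} :
    (AK F r).Adj ⟦x⟧ ⟦y⟧ ↔ (⟦x⟧ : Quotient (projSetoid F r)) ≠ ⟦y⟧ ∧ x.1 ⬝ᵥ y.1 = 0 :=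
  Iff.rfl

def map (f : (Fin r → F) →ₗ[F] Fin s → F) (hf : ∀ x y, f x ⬝ᵥ f y = x ⬝ᵥ y) :
    Quotient (projSetoid F r) → Quotient (projSetoid F s) :=
  Quotient.map (fun x ↦ ⟨f x, by rw [hf]; exact x.2⟩) fun _ _ ⟨a, ha, hxy⟩ ↦
    ⟨a, ha, (congrArg f hxy).trans (map_smul f a _)⟩

theorem map_injective {f : (Fin r → F) →ₗ[F] Fin s → F} (hf : ∀ x y, f x ⬝ᵥ f y = x ⬝ᵥ y) :
    Function.Injective (map f hf) := by
  rintro ⟨x⟩ ⟨y⟩ h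
  obtain ⟨a, ha, hxy⟩ := Quotient.exact h
  exact Quotient.sound ⟨a, ha, LinearMap.injective_of_dotProduct_map hf (by simpa using hxy)⟩

def embedding (f : (Fin r → F) →ₗ[F] Fin s → F) (hf : ∀ x y, f x ⬝ᵥ f y = x ⬝ᵥ y) :
    AK F r ↪g AK F s where
  toFun := map f hf
  inj' := map_injective hf
  map_rel_iff' {u v} := by
    induction u using Quotient.ind with | _ x
    induction v using Quotient.ind with | _ y
    show map f hf ⟦x⟧ ≠ map f hf ⟦y⟧ ∧ f x.1 ⬝ᵥ f y.1 = 0 ↔ ⟦x⟧ ≠ ⟦y⟧ ∧ x.1 ⬝ᵥ y.1 = 0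
    rw [hf, (map_injective hf).ne_iff]

theorem range_map_linearCombination {t : ℕ} {e : Fin t → Fin (t + 1) → F}
    (he : ∀ i j, e i ⬝ᵥ e j = if i = j then 1 else 0) {v : Fin (t + 1) → F} (hv : v ⬝ᵥ v ≠ 0)
    (hev : ∀ i, e i ⬝ᵥ v = 0) :
    Set.range (map _ (linearCombination_dotProduct_linearCombination_of_orthonormal he)) =
      {w | (AK F (t + 1)).Adj ⟦⟨v, hv⟩⟧ w} := by
  ext w
  induction w using Quotient.ind with | _ w
  constructor
  · rintro ⟨⟨x⟩, hx⟩
    rw [← hx]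
    refine adj_mk.mpr ⟨fun hvx ↦ hv ?_, ?_⟩
    · obtain ⟨a, -, hva⟩ := Quotient.exact hvx
      change v = a • Fintype.linearCombination F e x.1 at hva
      calc v ⬝ᵥ v = a * (Fintype.linearCombination F e x.1 ⬝ᵥ v) := by
            nth_rw 1 [hva]; rw [smul_dotProduct, smul_eq_mul]
        _ = 0 := by rw [linearCombination_dotProduct_eq_zero hev, mul_zero]
    · exact (dotProduct_comm _ _).trans (linearCombination_dotProduct_eq_zero hev _)
  · intro hw
    have hwv : w.1 ⬝ᵥ v = 0 := (dotProduct_comm _ _).trans (adj_mk.mp hw).2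
    have hw_eq := eq_linearCombination_of_dotProduct_eq_zero he hv hev (by simp) hwv
    refine ⟨⟦⟨fun i ↦ w.1 ⬝ᵥ e i, ?_⟩⟧, congrArg _ (Subtype.ext hw_eq.symm)⟩
    rw [← linearCombination_dotProduct_linearCombination_of_orthonormal he, ← hw_eq]
    exact w.2

end AK

theorem stmt_15_general (F : Type) [Field F] (t : ℕ)
    (v : Fin (t + 1) → F) (hv : dotProduct v v ≠ 0)
    (e' : Fin t → (Fin (t + 1) → F))
    (horth : ∀ i j, dotProduct (e' i) (e' j) = if i = j then 1 else 0)
    (hperp : ∀ i, dotProduct (e' i) v = 0) :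
    ∃ iso : (AK F t) ≃g ((AK F (t + 1)).induce
        {w | (AK F (t + 1)).Adj (Quotient.mk (projSetoid F (t + 1)) ⟨v, hv⟩) w}),
      ∀ x : {x : Fin t → F // dotProduct x x ≠ 0},
        ∃ h : dotProduct (∑ i, x.1 i • e' i) (∑ i, x.1 i • e' i) ≠ 0,
          (iso (Quotient.mk (projSetoid F t) x) : Quotient (projSetoid F (t + 1))) =
            Quotient.mk (projSetoid F (t + 1)) ⟨∑ i, x.1 i • e' i, h⟩ := by
  have hφ := linearCombination_dotProduct_linearCombination_of_orthonormal horth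
  have hrange := AK.range_map_linearCombination horth hv hperp
  exact ⟨(AK.embedding _ hφ).isoInduceRange.trans
      (SimpleGraph.Iso.induce .refl (hrange ▸ Set.bijOn_id _)),
    fun x ↦ ⟨(hφ x.1 x.1).trans_ne x.2, rfl⟩⟩

/-- The induced subgraph of `AK(t, q)` (on projective classes of vectors of
`𝔽_q^{t+1}`) on the neighbourhood of a vertex `[v]` is isomorphic to `AK(t-1, q)`
(on projective classes of vectors of `𝔽_q^t`); the isomorphism is induced by the
linear map sending the `i`-th standard basis vector to `e'_i`, where `e'_1, …, e'_t`
is an orthonormal basis of the hyperplane `v^⊥`. -/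
theorem stmt_15 (F : Type) [Field F] [Fintype F] (t : ℕ) (ht : 2 ≤ t)
    (v : Fin (t + 1) → F) (hv : dotProduct v v ≠ 0)
    (e' : Fin t → (Fin (t + 1) → F))
    (horth : ∀ i j, dotProduct (e' i) (e' j) = if i = j then 1 else 0)
    (hperp : ∀ i, dotProduct (e' i) v = 0) :
    ∃ iso : (AK F t) ≃g ((AK F (t + 1)).induce
        {w | (AK F (t + 1)).Adj (Quotient.mk (projSetoid F (t + 1)) ⟨v, hv⟩) w}),
      ∀ x : {x : Fin t → F // dotProduct x x ≠ 0},
        ∃ h : dotProduct (∑ i, x.1 i • e' i) (∑ i, x.1 i • e' i) ≠ 0,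
          (iso (Quotient.mk (projSetoid F t) x) : Quotient (projSetoid F (t + 1))) =
            Quotient.mk (projSetoid F (t + 1)) ⟨∑ i, x.1 i • e' i, h⟩ :=
  stmt_15_general F t v hv e' horth hperp
end
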